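/- arXiv:2211.08955 — 3 statements merged into one kernel-verified Lean document; each statement's English description precedes it below -/
import Mathlib

section
/- Let m, n ∈ ℕ with n ≥ m ≥ 1. The ℂ-vector space {A ∈ S : A is bihomogeneous of bidegree (m,n) and δ(A) = 0} has dimension binom(N+m,N)·binom(N+n,N) − binom(N+m−1,N)·binom(N+n+1,N). -/
open MvPolynomial

noncomputable section

/-- The polynomial ring `ℂ[Y₀,…,Y_N,X₀,…,X_N]`: the left copy of `Fin (N+1)` indexes the
`Y`-variables, the right copy indexes the `X`-variables. -/
abbrev S (N : ℕ) : Type := MvPolynomial (Fin (N + 1) ⊕ Fin (N + 1)) ℂ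

/-- Weight giving `1` to each `Yᵢ` and `0` to each `Xᵢ`. -/
def wY (N : ℕ) : (Fin (N + 1) ⊕ Fin (N + 1)) → ℕ := Sum.elim (fun _ => 1) (fun _ => 0)

/-- Weight giving `0` to each `Yᵢ` and `1` to each `Xᵢ`. -/
def wX (N : ℕ) : (Fin (N + 1) ⊕ Fin (N + 1)) → ℕ := Sum.elim (fun _ => 0) (fun _ => 1)

/-- `A` is bihomogeneous of bidegree `(m, n)`. -/
def Bihom (N m n : ℕ) (A : S N) : Prop :=
  A.IsWeightedHomogeneous (wY N) m ∧ A.IsWeightedHomogeneous (wX N) n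

/-- The operator `δ(A) = ∑ᵢ Xᵢ · ∂A/∂Yᵢ`. -/
def deltaOp (N : ℕ) (A : S N) : S N :=
  ∑ i : Fin (N + 1), X (Sum.inr i) * pderiv (Sum.inl i) A

/-- The quadratic polynomial `q = ∑ᵢ Xᵢ·Yᵢ`. -/
def qPoly (N : ℕ) : S N := ∑ i : Fin (N + 1), X (Sum.inr i) * X (Sum.inl i)

/-- The operator `δ` as a `ℂ`-linear endomorphism of `S N`. -/
def deltaLM (N : ℕ) : S N →ₗ[ℂ] S N :=
  ∑ i : Fin (N + 1),
    (LinearMap.mulLeft ℂ (X (Sum.inr i) : S N)) ∘ₗ (pderiv (Sum.inl i)).toLinearMap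

/-- The space of bihomogeneous polynomials of bidegree `(m, n)` in `S N`. -/
def bihomSubmodule (N m n : ℕ) : Submodule ℂ (S N) :=
  weightedHomogeneousSubmodule ℂ (wY N) m ⊓ weightedHomogeneousSubmodule ℂ (wX N) n

/-!
Write `δ = ∑ Xᵢ ∂/∂Yᵢ` and `ε = ∑ Yᵢ ∂/∂Xᵢ`. Their commutator is the difference of the two Euler
operators, so `δ ε = ε δ + (b - a)` on bidegree `(a, b)`. Applying `δ` to an eigenvector of `δ ε`
in bidegree `(a, b)` gives one in bidegree `(a - 1, b + 1)`, and `δ` kills bidegree `(0, b)`; by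
induction on `a`, every integer eigenvalue of `δ ε` on bidegree `(a, b)` with `a ≤ b` is at least
`b - a`. Hence `δ ε` is invertible on bidegree `(m - 1, n + 1)`, so `δ` maps bidegree `(m, n)` onto
bidegree `(m - 1, n + 1)`, and rank–nullity together with the monomial count
`C(N+a,N)·C(N+b,N)` in bidegree `(a, b)` gives the formula.
-/

namespace MvPolynomial

variable {R σ : Type*} [CommSemiring R] {φ : MvPolynomial σ R}

lemma IsWeightedHomogeneous.pderiv_eq_zero_of_lt {w : σ → ℕ} {n : ℕ} {i : σ}
    (h : φ.IsWeightedHomogeneous w n) (hn : n < w i) : pderiv i φ = 0 := by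
  ext d
  rw [coeff_pderiv, coeff_zero]
  by_contra hd
  have hweight := h (left_ne_zero_of_mul hd)
  rw [map_add, Finsupp.weight_single, smul_eq_mul, one_mul] at hweight
  omega

lemma IsWeightedHomogeneous.X_mul_pderiv {w : σ → ℕ} {n n' m : ℕ} {i j : σ}
    (h : φ.IsWeightedHomogeneous w n) (hi : n' + w i = n) (hj : w j + n' = m) :
    (X j * pderiv i φ).IsWeightedHomogeneous w m :=
  hj ▸ (isWeightedHomogeneous_X R w j).mul (h.pderiv hi)

end MvPolynomial

lemma Derivation.sum_apply {R A M ι : Type*} [CommSemiring R] [CommSemiring A] [AddCommMonoid M]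
    [Algebra R A] [Module A M] [Module R M] (s : Finset ι) (D : ι → Derivation R A M) (a : A) :
    (∑ i ∈ s, D i) a = ∑ i ∈ s, D i a :=
  map_sum ((Pi.evalAddMonoidHom _ a).comp Derivation.coeFnAddMonoidHom) D s

open Module in
lemma Submodule.finrank_inf_ker_add_finrank_map {K V W : Type*} [DivisionRing K] [AddCommGroup V]
    [Module K V] [AddCommGroup W] [Module K W] (f : V →ₗ[K] W) (p : Submodule K V)
    [FiniteDimensional K p] :
    finrank K ↥(p ⊓ LinearMap.ker f) + finrank K ↥(p.map f) = finrank K p := by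
  rw [← LinearMap.finrank_range_add_finrank_ker (f.domRestrict p), LinearMap.range_domRestrict,
    LinearMap.ker_domRestrict, ← Submodule.map_comap_subtype, add_comm,
    ← (Submodule.equivMapOfInjective _ p.injective_subtype _).finrank_eq]

namespace Polarization

variable {N : ℕ}

def polarization (N : ℕ) (u v : Fin (N + 1) → Fin (N + 1) ⊕ Fin (N + 1)) :
    Derivation ℂ (S N) (S N) :=
  ∑ i, (X (u i) : S N) • pderiv (v i)

local notation "δ" => polarization _ Sum.inr Sum.inl
local notation "ε" => polarization _ Sum.inl Sum.inr

lemma polarization_apply (u v : Fin (N + 1) → Fin (N + 1) ⊕ Fin (N + 1)) (A : S N) :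
    polarization N u v A = ∑ i, X (u i) * pderiv (v i) A := by
  simp [polarization, Derivation.sum_apply]

lemma deltaLM_eq_polarization : deltaLM N = polarization N Sum.inr Sum.inl :=
  LinearMap.ext fun A => by simp [deltaLM, polarization_apply]

lemma lie_polarization :
    ⁅polarization N Sum.inr Sum.inl, polarization N Sum.inl Sum.inr⁆ =
      polarization N Sum.inr Sum.inr - polarization N Sum.inl Sum.inl := by
  classical
  refine derivation_ext fun k => ?_
  rcases k with j | j <;>
    simp [Derivation.commutator_apply, polarization_apply, pderiv_X, Pi.single_apply]

lemma polarization_inl_inl_of_isWeightedHomogeneous {a : ℕ} {A : S N}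
    (hA : A.IsWeightedHomogeneous (wY N) a) : polarization N Sum.inl Sum.inl A = (a : ℂ) • A := by
  have euler := hA.sum_weight_X_mul_pderiv
  simp only [Fintype.sum_sum_type, wY, Sum.elim_inl, Sum.elim_inr, one_smul, zero_smul,
    Finset.sum_const_zero, add_zero] at euler
  rw [polarization_apply, euler, Nat.cast_smul_eq_nsmul]

lemma polarization_inr_inr_of_isWeightedHomogeneous {b : ℕ} {A : S N}
    (hA : A.IsWeightedHomogeneous (wX N) b) : polarization N Sum.inr Sum.inr A = (b : ℂ) • A := by
  have euler := hA.sum_weight_X_mul_pderiv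
  simp only [Fintype.sum_sum_type, wX, Sum.elim_inl, Sum.elim_inr, one_smul, zero_smul,
    Finset.sum_const_zero, zero_add] at euler
  rw [polarization_apply, euler, Nat.cast_smul_eq_nsmul]

lemma delta_mem_bihomSubmodule {a b : ℕ} {A : S N} (hA : A ∈ bihomSubmodule N (a + 1) b) :
    δ A ∈ bihomSubmodule N a (b + 1) := by
  rw [polarization_apply]
  exact Submodule.sum_mem _ fun i _ =>
    ⟨hA.1.X_mul_pderiv (n' := a) (by simp [wY]) (by simp [wY]),
      hA.2.X_mul_pderiv (n' := b) (by simp [wX]) (by simp [wX, add_comm])⟩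

lemma epsilon_mem_bihomSubmodule {a b : ℕ} {A : S N} (hA : A ∈ bihomSubmodule N a (b + 1)) :
    ε A ∈ bihomSubmodule N (a + 1) b := by
  rw [polarization_apply]
  exact Submodule.sum_mem _ fun i _ =>
    ⟨hA.1.X_mul_pderiv (n' := a) (by simp [wY]) (by simp [wY, add_comm]),
      hA.2.X_mul_pderiv (n' := b) (by simp [wX]) (by simp [wX])⟩

lemma delta_eq_zero_of_mem_bihomSubmodule_zero {b : ℕ} {A : S N}
    (hA : A ∈ bihomSubmodule N 0 b) : δ A = 0 := by
  rw [polarization_apply]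
  exact Finset.sum_eq_zero fun i _ => by rw [hA.1.pderiv_eq_zero_of_lt (by simp [wY]), mul_zero]

lemma delta_epsilon_of_mem_bihomSubmodule {a b : ℕ} {A : S N} (hA : A ∈ bihomSubmodule N a b) :
    δ (ε A) = ε (δ A) + ((b : ℂ) - a) • A := by
  have h := congrArg (· A) (lie_polarization (N := N))
  simp only [Derivation.commutator_apply, Derivation.coe_sub, Pi.sub_apply,
    polarization_inr_inr_of_isWeightedHomogeneous hA.2,
    polarization_inl_inl_of_isWeightedHomogeneous hA.1] at h
  rw [sub_smul, ← h, add_sub_cancel]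

lemma eq_zero_of_delta_eq_zero {a b : ℕ} {A : S N} (hA : A ∈ bihomSubmodule N a b) {c : ℤ}
    (hc : c ≠ b - a) (h : δ (ε A) = (c : ℂ) • A) (hδ : δ A = 0) : A = 0 := by
  rw [delta_epsilon_of_mem_bihomSubmodule hA, hδ, map_zero, zero_add] at h
  have hcoeff : ((b : ℂ) - a - c) ≠ 0 := by
    rw [show ((b : ℂ) - a - c) = ((b - a - c : ℤ) : ℂ) by push_cast; ring]
    exact Int.cast_ne_zero.mpr (by omega)
  have hsmul : ((b : ℂ) - a - c) • A = 0 := by rw [sub_smul, h, sub_self]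
  exact (smul_eq_zero.mp hsmul).resolve_left hcoeff

lemma eq_zero_of_delta_epsilon_eq_smul {a b : ℕ} (hab : a ≤ b) {A : S N}
    (hA : A ∈ bihomSubmodule N a b) {c : ℤ} (hc : c < b - a) (h : δ (ε A) = (c : ℂ) • A) :
    A = 0 := by
  induction a generalizing b A c with
  | zero => exact eq_zero_of_delta_eq_zero hA hc.ne h (delta_eq_zero_of_mem_bihomSubmodule_zero hA)
  | succ a ih =>
    refine eq_zero_of_delta_eq_zero hA hc.ne h ?_
    have hεδ : ε (δ A) = (c : ℂ) • A - ((b : ℂ) - (a + 1 : ℕ)) • A := by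
      rw [← h, delta_epsilon_of_mem_bihomSubmodule hA, add_sub_cancel_right]
    refine ih (b := b + 1) (c := c - (b - (a + 1))) (by omega) (delta_mem_bihomSubmodule hA)
      (by omega) ?_
    rw [hεδ, map_sub, Derivation.map_smul, Derivation.map_smul, ← sub_smul]
    push_cast
    ring_nf

open Finset in
def bidegreeExponents (N a b : ℕ) : Finset (Fin (N + 1) ⊕ Fin (N + 1) →₀ ℕ) :=
  (univ.finsuppAntidiag a ×ˢ univ.finsuppAntidiag b).map
    Finsupp.sumFinsuppEquivProdFinsupp.symm.toEmbedding

lemma mem_bidegreeExponents {a b : ℕ} {d : Fin (N + 1) ⊕ Fin (N + 1) →₀ ℕ} :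
    d ∈ bidegreeExponents N a b ↔ d.weight (wY N) = a ∧ d.weight (wX N) = b := by
  simp only [bidegreeExponents, Finset.mem_map_equiv, Equiv.symm_symm,
    Finsupp.sumFinsuppEquivProdFinsupp_apply, Finset.mem_product, Finset.mem_finsuppAntidiag,
    Finsupp.comapDomain_support, Finset.preimage_inl, Finset.preimage_inr, Finset.subset_univ,
    and_true, Finsupp.weight_eq_sum, Fintype.sum_sum_type, wY, wX, Sum.elim_inl, Sum.elim_inr,
    smul_eq_mul, mul_one, mul_zero, Finset.sum_const_zero, add_zero, zero_add]
  rfl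

lemma bihomSubmodule_eq_restrictSupport (N a b : ℕ) :
    bihomSubmodule N a b = restrictSupport ℂ ↑(bidegreeExponents N a b) := by
  ext A
  simp only [bihomSubmodule, Submodule.mem_inf, mem_weightedHomogeneousSubmodule,
    mem_restrictSupport_iff, Set.subset_def, Finset.mem_coe, mem_bidegreeExponents,
    mem_support_iff, IsWeightedHomogeneous, ← forall_and]

instance (N a b : ℕ) : FiniteDimensional ℂ (bihomSubmodule N a b) := by
  rw [bihomSubmodule_eq_restrictSupport]
  exact Module.Finite.of_basis (basisRestrictSupport ℂ _)

lemma finrank_bihomSubmodule (N a b : ℕ) :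
    Module.finrank ℂ (bihomSubmodule N a b) = (N + a).choose N * (N + b).choose N := by
  rw [bihomSubmodule_eq_restrictSupport, Module.finrank_eq_card_basis (basisRestrictSupport ℂ _)]
  simp only [Finset.coe_sort_coe, Fintype.card_coe]
  rw [bidegreeExponents, Finset.card_map, Finset.card_product,
    Finset.card_finsuppAntidiag_nat_eq_choose, Finset.card_finsuppAntidiag_nat_eq_choose,
    Finset.card_univ, Fintype.card_fin, Nat.add_right_comm N 1, Nat.add_right_comm N 1,
    Nat.add_sub_cancel, Nat.add_sub_cancel, Nat.choose_symm_add, Nat.choose_symm_add]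

lemma exists_delta_eq {a b : ℕ} (hab : a ≤ b) {B : S N} (hB : B ∈ bihomSubmodule N a (b + 1)) :
    ∃ A ∈ bihomSubmodule N (a + 1) b, δ A = B := by
  let T := ((polarization N Sum.inr Sum.inl).toLinearMap ∘ₗ
    (polarization N Sum.inl Sum.inr).toLinearMap).restrict
    (p := bihomSubmodule N a (b + 1)) (q := bihomSubmodule N a (b + 1))
    fun A hA => delta_mem_bihomSubmodule (epsilon_mem_bihomSubmodule hA)
  have hT : Function.Injective T := by
    refine (injective_iff_map_eq_zero T).mpr fun A hA => Subtype.ext ?_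
    refine eq_zero_of_delta_epsilon_eq_smul (c := 0) (by omega : a ≤ b + 1) A.2 (by omega) ?_
    simpa [T] using congrArg Subtype.val hA
  obtain ⟨A, hA⟩ := LinearMap.injective_iff_surjective.mp hT ⟨B, hB⟩
  exact ⟨_, epsilon_mem_bihomSubmodule A.2, congrArg Subtype.val hA⟩

end Polarization

open Polarization in
theorem statement4_general (N : ℕ) (m n : ℕ) (hm : 1 ≤ m) (hmn : m ≤ n) :
    (Module.finrank ℂ ↥(bihomSubmodule N m n ⊓ LinearMap.ker (deltaLM N)) : ℤ) =
      (Nat.choose (N + m) N : ℤ) * Nat.choose (N + n) N -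
        (Nat.choose (N + m - 1) N : ℤ) * Nat.choose (N + n + 1) N := by
  obtain ⟨a, rfl⟩ : ∃ a, m = a + 1 := ⟨m - 1, by omega⟩
  have hrange : (bihomSubmodule N (a + 1) n).map (deltaLM N) = bihomSubmodule N a (n + 1) := by
    rw [deltaLM_eq_polarization]
    refine le_antisymm (Submodule.map_le_iff_le_comap.mpr fun A hA => ?_) fun B hB => ?_
    · exact delta_mem_bihomSubmodule hA
    · obtain ⟨A, hA, rfl⟩ := exists_delta_eq (by omega) hB
      exact ⟨A, hA, rfl⟩
  have rank_nullity := Submodule.finrank_inf_ker_add_finrank_map (deltaLM N)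
    (bihomSubmodule N (a + 1) n)
  rw [hrange, finrank_bihomSubmodule, finrank_bihomSubmodule] at rank_nullity
  simp only [← Nat.add_assoc] at rank_nullity ⊢
  rw [Nat.add_sub_cancel]
  zify at rank_nullity
  linear_combination rank_nullity

/-- For `n ≥ m ≥ 1`, the space of bihomogeneous solutions of `δ(A) = 0` of
bidegree `(m, n)` has dimension
`C(N+m,N)·C(N+n,N) − C(N+m−1,N)·C(N+n+1,N)`. -/
theorem statement4 (N : ℕ) (hN : 2 ≤ N) (m n : ℕ) (hm : 1 ≤ m) (hmn : m ≤ n) :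
    (Module.finrank ℂ ↥(bihomSubmodule N m n ⊓ LinearMap.ker (deltaLM N)) : ℤ) =
      (Nat.choose (N + m) N : ℤ) * Nat.choose (N + n) N -
        (Nat.choose (N + m - 1) N : ℤ) * Nat.choose (N + n + 1) N :=
  statement4_general N m n hm hmn
end
end

section
/- Let d ≥ 1 and let P ∈ S be a polynomial in the X-variables only, homogeneous of degree d. Let P^Y ∈ S denote the polynomial obtained from P by substituting Yᵢ for Xᵢ for every 0 ≤ i ≤ N. Then δ^{d−1}(P^Y) = (d−1)! · (∇P·Y). -/
/-!
Write `P = Q(X)` with `Q` homogeneous of degree `d`, so that `P^Y = Q(Y)`. The operator `δ` is a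
derivation killing the `Xᵢ`, and `δ(Q(Y)) = ∑ᵢ Xᵢ (∂ᵢQ)(Y)`. By induction on `d`,
`δ^{d-1}(Q(Y)) = (d-1)! ∑ⱼ Yⱼ (∂ⱼQ)(X)`: applying the induction hypothesis to each `∂ᵢQ` and
swapping `∂ᵢ∂ⱼ = ∂ⱼ∂ᵢ` leaves `∑ᵢ Xᵢ ∂ᵢ(∂ⱼQ)(X)`, which is `(d-1) (∂ⱼQ)(X)` by Euler's identity.
The base case `d = 1` is Euler's identity for the linear form `Q`, whose partial derivatives are
constants.
-/

open MvPolynomial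

noncomputable section

open scoped Nat

namespace MvPolynomial

variable {R σ τ : Type*} [CommSemiring R]

theorem pderiv_comm (i j : σ) (p : MvPolynomial σ R) :
    pderiv i (pderiv j p) = pderiv j (pderiv i p) := by
  classical
  induction p using induction_on with
  | C a => simp
  | add p q hp hq => simp [hp, hq]
  | mul_X p k h =>
    simp only [Derivation.leibniz, pderiv_X, Pi.single_apply, smul_eq_mul, map_add, h]
    split_ifs <;> simp <;> ring

theorem IsWeightedHomogeneous.of_rename {M : Type*} [AddCommMonoid M] {f : σ → τ}
    (hf : Function.Injective f) {w : τ → M} {n : M} {p : MvPolynomial σ R}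
    (h : (rename f p).IsWeightedHomogeneous w n) : p.IsWeightedHomogeneous (w ∘ f) n := by
  intro m hm
  rw [← h (by rwa [coeff_rename_mapDomain f hf]), Finsupp.weight_apply, Finsupp.weight_apply,
    Finsupp.sum_mapDomain_index_inj hf]
  rfl

theorem IsHomogeneous.rename_eq_rename {p : MvPolynomial σ R} (h : p.IsHomogeneous 0)
    (f g : σ → τ) : rename f p = rename g p := by
  rw [totalDegree_eq_zero_iff_eq_C.mp ((totalDegree_zero_iff_isHomogeneous _).mpr h), rename_C,
    rename_C]

theorem IsHomogeneous.sum_X_mul_rename_pderiv [Fintype σ] {n : ℕ} {p : MvPolynomial σ R}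
    (h : p.IsHomogeneous n) (f : σ → τ) :
    ∑ i : σ, X (f i) * rename f (pderiv i p) = n • rename f p := by
  rw [← map_nsmul, ← h.sum_X_mul_pderiv, map_sum]
  simp only [map_mul, rename_X]

end MvPolynomial

section Delta

variable (N : ℕ)

def deltaDerivation : Derivation ℂ (S N) (S N) :=
  ∑ i : Fin (N + 1), (X (Sum.inr i) : S N) • pderiv (Sum.inl i)

theorem deltaOp_eq_deltaDerivation : deltaOp N = deltaDerivation N := by
  funext A
  rw [deltaDerivation, ← Derivation.coeFnAddMonoidHom_apply, map_sum, Finset.sum_apply]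
  simp [deltaOp, Derivation.coeFnAddMonoidHom_apply]

theorem deltaOp_iterate_sum {ι : Type*} (n : ℕ) (s : Finset ι) (f : ι → S N) :
    (deltaOp N)^[n] (∑ i ∈ s, f i) = ∑ i ∈ s, (deltaOp N)^[n] (f i) := by
  rw [deltaOp_eq_deltaDerivation, ← Derivation.coeFn_coe, ← Module.End.coe_pow, map_sum]

theorem deltaOp_X_inr_mul (k : Fin (N + 1)) (A : S N) :
    deltaOp N (X (Sum.inr k) * A) = X (Sum.inr k) * deltaOp N A := by
  have hX : deltaOp N (X (Sum.inr k)) = 0 := by simp [deltaOp]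
  rw [deltaOp_eq_deltaDerivation] at hX ⊢
  rw [Derivation.leibniz, hX, smul_zero, add_zero, smul_eq_mul]

theorem deltaOp_iterate_X_inr_mul (n : ℕ) (k : Fin (N + 1)) (A : S N) :
    (deltaOp N)^[n] (X (Sum.inr k) * A) = X (Sum.inr k) * (deltaOp N)^[n] A :=
  Function.Commute.iterate_left (deltaOp_X_inr_mul N k) n A

theorem deltaOp_rename_inl (Q : MvPolynomial (Fin (N + 1)) ℂ) :
    deltaOp N (rename Sum.inl Q) = ∑ i, X (Sum.inr i) * rename Sum.inl (pderiv i Q) := by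
  simp only [deltaOp, pderiv_rename Sum.inl_injective]

theorem deltaOp_iterate_rename_inl {n : ℕ} {Q : MvPolynomial (Fin (N + 1)) ℂ}
    (hQ : Q.IsHomogeneous (n + 1)) :
    (deltaOp N)^[n] (rename Sum.inl Q) =
      (n ! : S N) * ∑ j, X (Sum.inl j) * rename Sum.inr (pderiv j Q) := by
  induction n generalizing Q with
  | zero =>
    have hconst (j : Fin (N + 1)) : rename Sum.inl (pderiv j Q) = rename Sum.inr (pderiv j Q) :=
      hQ.pderiv.rename_eq_rename _ _
    rw [Function.iterate_zero_apply, Nat.factorial_zero, Nat.cast_one, one_mul]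
    simp_rw [← hconst]
    rw [hQ.sum_X_mul_rename_pderiv, zero_add, one_smul]
  | succ n ih =>
    calc (deltaOp N)^[n + 1] (rename Sum.inl Q)
        = ∑ i, X (Sum.inr i) * (deltaOp N)^[n] (rename Sum.inl (pderiv i Q)) := by
          rw [Function.iterate_succ_apply, deltaOp_rename_inl, deltaOp_iterate_sum]
          simp only [deltaOp_iterate_X_inr_mul]
      _ = ∑ i, X (Sum.inr i) *
            ((n ! : S N) * ∑ j, X (Sum.inl j) * rename Sum.inr (pderiv j (pderiv i Q))) := by
          simp only [ih hQ.pderiv]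
      _ = (n ! : S N) * ∑ j, X (Sum.inl j) *
            ∑ i, X (Sum.inr i) * rename Sum.inr (pderiv i (pderiv j Q)) := by
          simp only [Finset.mul_sum]
          rw [Finset.sum_comm]
          refine Finset.sum_congr rfl fun j _ => Finset.sum_congr rfl fun i _ => ?_
          rw [pderiv_comm]
          ring
      _ = (n ! : S N) * ∑ j, X (Sum.inl j) * ((n + 1) • rename Sum.inr (pderiv j Q)) := by
          simp only [hQ.pderiv.sum_X_mul_rename_pderiv, Nat.add_sub_cancel]
      _ = ((n + 1)! : S N) * ∑ j, X (Sum.inl j) * rename Sum.inr (pderiv j Q) := by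
          simp only [Finset.mul_sum]
          refine Finset.sum_congr rfl fun j _ => ?_
          rw [nsmul_eq_mul, Nat.factorial_succ]
          push_cast
          ring

end Delta

theorem statement9_general (N : ℕ) (d : ℕ) (hd : 1 ≤ d)
    (P : S N)
    (hPsupp : P ∈ MvPolynomial.supported ℂ
      (Set.range (Sum.inr : Fin (N + 1) → Fin (N + 1) ⊕ Fin (N + 1))))
    (hPhom : P.IsWeightedHomogeneous (wX N) d) :
    (deltaOp N)^[d - 1]
        (aeval (Sum.elim (fun i => (X (Sum.inl i) : S N)) (fun i => (X (Sum.inl i) : S N))) P) =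
      (Nat.factorial (d - 1) : S N) *
        ∑ i : Fin (N + 1), X (Sum.inl i) * pderiv (Sum.inr i) P := by
  obtain ⟨Q, rfl⟩ := exists_rename_eq_of_vars_subset_range P Sum.inr Sum.inr_injective
    (by simpa using mem_supported.mp hPsupp)
  obtain ⟨n, rfl⟩ : ∃ n, d = n + 1 := ⟨d - 1, by omega⟩
  have hQ : Q.IsHomogeneous (n + 1) := hPhom.of_rename Sum.inr_injective
  rw [aeval_rename, Sum.elim_comp_inr, ← Function.comp_def X Sum.inl, ← rename_eq_aeval]
  simp only [Nat.add_sub_cancel, pderiv_rename Sum.inr_injective]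
  exact deltaOp_iterate_rename_inl N hQ

/-- For `P` homogeneous of degree `d ≥ 1` in the `X`-variables only,
`δ^{d−1}(P(Y)) = (d−1)! · ∑ᵢ Yᵢ·∂P/∂Xᵢ`, where `P(Y)` is obtained from `P` by
substituting `Yᵢ` for `Xᵢ`. -/
theorem statement9 (N : ℕ) (hN : 2 ≤ N) (d : ℕ) (hd : 1 ≤ d)
    (P : S N)
    (hPsupp : P ∈ MvPolynomial.supported ℂ
      (Set.range (Sum.inr : Fin (N + 1) → Fin (N + 1) ⊕ Fin (N + 1))))
    (hPhom : P.IsWeightedHomogeneous (wX N) d) :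
    (deltaOp N)^[d - 1]
        (aeval (Sum.elim (fun i => (X (Sum.inl i) : S N)) (fun i => (X (Sum.inl i) : S N))) P) =
      (Nat.factorial (d - 1) : S N) *
        ∑ i : Fin (N + 1), X (Sum.inl i) * pderiv (Sum.inr i) P :=
  statement9_general N d hd P hPsupp hPhom
end
end

section
/- Let d ≥ 3, let P ∈ S be a polynomial in the X-variables only, homogeneous of degree d, and let A ∈ S be a polynomial in the Y-variables only, homogeneous of degree d−3. Then there exists a bihomogeneous B ∈ S of bidegree (d−1, d−2) with δ(B) = A · (∇P·Y). -/
open MvPolynomial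

noncomputable section

/-!
The derivations `δ = ∑ Xᵢ ∂/∂Yᵢ` and `ε = ∑ Yᵢ ∂/∂Xᵢ` satisfy `[δ, ε] = E_X − E_Y` (difference of
the Euler operators), so on a polynomial of bidegree `(m, n)` the commutator acts as `n − m`.
For `P` of bidegree `(0, d)` we have `δP = 0`, hence `δ(ε^{k+1} P) = (k+1)(d−k) · ε^k P`.
A preimage of `A · ε^k P` is then `c⁻¹ (A · ε^{k+1} P − B')` with `c = (k+1)(d−k)` and
`δB' = δA · ε^{k+1} P`; this recursion lowers the `Y`-degree of `A` and stops when `δA = 0`.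
-/

theorem Derivation.finset_sum_apply {R A M ι : Type*} [CommSemiring R] [CommSemiring A]
    [Algebra R A] [AddCommMonoid M] [Module A M] [Module R M] (s : Finset ι)
    (D : ι → Derivation R A M) (a : A) : (∑ i ∈ s, D i) a = ∑ i ∈ s, D i a := by
  simp only [← Derivation.coeFnAddMonoidHom_apply, map_sum, Finset.sum_apply]

theorem Derivation.map_inv_smul_mul_sub {K A : Type*} [Field K] [CommRing A] [Algebra K A]
    (D : Derivation K A A) {c : K} (hc : c ≠ 0) {a b q q' : A} (hq : D q' = c • q)
    (hb : D b = D a * q') : D (c⁻¹ • (a * q' - b)) = a * q := by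
  rw [D.map_smul, map_sub, D.leibniz, hq, hb, smul_eq_mul, smul_eq_mul, mul_comm q',
    add_sub_cancel_right, mul_smul_comm, smul_smul, inv_mul_cancel₀ hc, one_smul]

namespace MvPolynomial

variable {σ R : Type*} [CommSemiring R] {w : σ → ℕ} {f : MvPolynomial σ R}

theorem isWeightedHomogeneous_zero_of_mem_supported {s : Set σ} (hw : ∀ i ∈ s, w i = 0)
    (hf : f ∈ supported R s) : f.IsWeightedHomogeneous w 0 := by
  intro d hd
  rw [Finsupp.weight_apply, Finsupp.sum]
  refine Finset.sum_eq_zero fun i hi => ?_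
  have hvar : i ∈ f.vars := (mem_vars_iff_mem_support i).mpr ⟨d, mem_support_iff.mpr hd, hi⟩
  rw [hw i (mem_supported.mp hf hvar), smul_zero]

theorem pderiv_eq_zero_of_isWeightedHomogeneous_zero (hf : f.IsWeightedHomogeneous w 0) {i : σ}
    (hi : w i ≠ 0) : pderiv i f = 0 := by
  refine pderiv_eq_zero_of_notMem_vars fun hvar => ?_
  obtain ⟨d, hd, hdi⟩ := (mem_vars_iff_mem_support i).mp hvar
  have := Finsupp.le_weight w hi d
  rw [hf (mem_support_iff.mp hd)] at this
  exact Finsupp.mem_support_iff.mp hdi (Nat.le_zero.mp this)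

end MvPolynomial

variable {N m n m' n' p : ℕ} {f g : S N}

theorem Bihom.sub (hf : Bihom N m n f) (hg : Bihom N m n g) : Bihom N m n (f - g) :=
  ⟨hf.1.sub hg.1, hf.2.sub hg.2⟩

theorem Bihom.mul (hf : Bihom N m n f) (hg : Bihom N m' n' g) :
    Bihom N (m + m') (n + n') (f * g) :=
  ⟨hf.1.mul hg.1, hf.2.mul hg.2⟩

theorem Bihom.smul (c : ℂ) (hf : Bihom N m n f) : Bihom N m n (c • f) := by
  rw [smul_eq_C_mul]
  exact ⟨hf.1.C_mul c, hf.2.C_mul c⟩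

theorem Bihom.sum {ι : Type*} (s : Finset ι) {g : ι → S N} (h : ∀ i ∈ s, Bihom N m n (g i)) :
    Bihom N m n (∑ i ∈ s, g i) :=
  ⟨.sum s g m fun i hi => (h i hi).1, .sum s g n fun i hi => (h i hi).2⟩

theorem bihom_zero : Bihom N m n 0 :=
  ⟨isWeightedHomogeneous_zero _ _ _, isWeightedHomogeneous_zero _ _ _⟩

theorem bihom_X_inl (i : Fin (N + 1)) : Bihom N 1 0 (X (Sum.inl i)) :=
  ⟨isWeightedHomogeneous_X _ _ _, isWeightedHomogeneous_X _ _ _⟩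

theorem bihom_X_inr (i : Fin (N + 1)) : Bihom N 0 1 (X (Sum.inr i)) :=
  ⟨isWeightedHomogeneous_X _ _ _, isWeightedHomogeneous_X _ _ _⟩

theorem Bihom.pderiv_inl (hf : Bihom N (m + 1) n f) (i : Fin (N + 1)) :
    Bihom N m n (pderiv (Sum.inl i) f) :=
  ⟨hf.1.pderiv rfl, hf.2.pderiv rfl⟩

theorem Bihom.pderiv_inr (hf : Bihom N m (n + 1) f) (i : Fin (N + 1)) :
    Bihom N m n (pderiv (Sum.inr i) f) :=
  ⟨hf.1.pderiv rfl, hf.2.pderiv rfl⟩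

def delta (N : ℕ) : Derivation ℂ (S N) (S N) :=
  ∑ i : Fin (N + 1), (X (Sum.inr i) : S N) • pderiv (Sum.inl i)

/-- `ε(P) = ∇P·Y`. -/
def eps (N : ℕ) : Derivation ℂ (S N) (S N) :=
  ∑ i : Fin (N + 1), (X (Sum.inl i) : S N) • pderiv (Sum.inr i)

theorem delta_apply (f : S N) : delta N f = deltaOp N f := by
  simp [delta, deltaOp, Derivation.finset_sum_apply]

theorem eps_apply (f : S N) : eps N f = ∑ i, X (Sum.inl i) * pderiv (Sum.inr i) f := by
  simp [eps, Derivation.finset_sum_apply]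

theorem delta_X_inl (k : Fin (N + 1)) : delta N (X (Sum.inl k)) = X (Sum.inr k) := by
  simp [delta_apply, deltaOp, pderiv_X, Pi.single_apply]

theorem delta_X_inr (k : Fin (N + 1)) : delta N (X (Sum.inr k)) = 0 := by
  simp [delta_apply, deltaOp, pderiv_X]

theorem eps_X_inl (k : Fin (N + 1)) : eps N (X (Sum.inl k)) = 0 := by
  simp [eps_apply, pderiv_X]

theorem eps_X_inr (k : Fin (N + 1)) : eps N (X (Sum.inr k)) = X (Sum.inl k) := by
  simp [eps_apply, pderiv_X, Pi.single_apply]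

theorem commutator_delta_eps :
    ⁅delta N, eps N⁆ = ∑ i : Fin (N + 1), (X (Sum.inr i) : S N) • pderiv (Sum.inr i) -
      ∑ i : Fin (N + 1), (X (Sum.inl i) : S N) • pderiv (Sum.inl i) := by
  refine derivation_ext fun j => ?_
  rcases j with k | k <;>
    simp [Derivation.commutator_apply, delta_X_inl, delta_X_inr, eps_X_inl, eps_X_inr,
      Derivation.finset_sum_apply, pderiv_X, Pi.single_apply]

theorem sum_X_inl_mul_pderiv_inl (hf : f.IsWeightedHomogeneous (wY N) m) :
    ∑ i : Fin (N + 1), X (Sum.inl i) * pderiv (Sum.inl i) f = (m : ℂ) • f := by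
  rw [Nat.cast_smul_eq_nsmul]
  simpa [-nsmul_eq_mul, Fintype.sum_sum_type, wY] using hf.sum_weight_X_mul_pderiv

theorem sum_X_inr_mul_pderiv_inr (hf : f.IsWeightedHomogeneous (wX N) n) :
    ∑ i : Fin (N + 1), X (Sum.inr i) * pderiv (Sum.inr i) f = (n : ℂ) • f := by
  rw [Nat.cast_smul_eq_nsmul]
  simpa [-nsmul_eq_mul, Fintype.sum_sum_type, wX] using hf.sum_weight_X_mul_pderiv

theorem delta_eps_sub_eps_delta (hf : Bihom N m n f) :
    delta N (eps N f) - eps N (delta N f) = ((n : ℂ) - m) • f := by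
  rw [← Derivation.commutator_apply, commutator_delta_eps, Derivation.sub_apply,
    Derivation.finset_sum_apply, Derivation.finset_sum_apply]
  simp only [Derivation.smul_apply, smul_eq_mul]
  rw [sum_X_inr_mul_pderiv_inr hf.2, sum_X_inl_mul_pderiv_inl hf.1, sub_smul]

theorem Bihom.map_delta (hf : Bihom N (m + 1) n f) : Bihom N m (n + 1) (delta N f) := by
  rw [delta_apply]
  refine Bihom.sum _ fun i _ => ?_
  simpa only [zero_add, add_comm 1] using (bihom_X_inr i).mul (hf.pderiv_inl i)

theorem Bihom.map_eps (hf : Bihom N m (n + 1) f) : Bihom N (m + 1) n (eps N f) := by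
  rw [eps_apply]
  refine Bihom.sum _ fun i _ => ?_
  simpa only [zero_add, add_comm 1] using (bihom_X_inl i).mul (hf.pderiv_inr i)

theorem Bihom.iterate_eps (hf : Bihom N m n f) {t : ℕ} (ht : t ≤ n) :
    Bihom N (m + t) (n - t) ((eps N)^[t] f) := by
  induction t with
  | zero => simpa using hf
  | succ t ih =>
    rw [Function.iterate_succ_apply']
    have hft := ih (by omega)
    rw [show n - t = n - (t + 1) + 1 by omega] at hft
    exact hft.map_eps

theorem delta_eq_zero_of_bihom_zero (hf : Bihom N 0 n f) : delta N f = 0 := by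
  rw [delta_apply]
  refine Finset.sum_eq_zero fun i _ => ?_
  rw [pderiv_eq_zero_of_isWeightedHomogeneous_zero hf.1 one_ne_zero, mul_zero]

theorem delta_iterate_eps_succ (hf : Bihom N m n f) (hδ : delta N f = 0) {t : ℕ} (ht : t ≤ n) :
    delta N ((eps N)^[t + 1] f) = ((t + 1 : ℂ) * (n - m - t)) • (eps N)^[t] f := by
  induction t with
  | zero =>
    have h := delta_eps_sub_eps_delta hf
    rw [hδ, map_zero, sub_zero] at h
    simpa using h
  | succ t ih =>
    have hft := hf.iterate_eps (t := t + 1) ht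
    rw [Function.iterate_succ_apply' _ (t + 1), ← sub_add_cancel (delta N _) (eps N _),
      delta_eps_sub_eps_delta hft, ih (by omega), Derivation.map_smul,
      ← Function.iterate_succ_apply' (eps N), ← add_smul]
    push_cast [Nat.cast_sub ht]
    ring_nf

variable {d k : ℕ} {P A : S N}

theorem exists_bihom_delta_eq_of_delta_eq (hP : Bihom N 0 d P) (hk : k < d)
    (hA : Bihom N m p A) {B' : S N} (hB' : Bihom N (m + (k + 1)) (p + (d - (k + 1))) B')
    (hδB' : delta N B' = delta N A * (eps N)^[k + 1] P) :
    ∃ B, Bihom N (m + (k + 1)) (p + (d - (k + 1))) B ∧ delta N B = A * (eps N)^[k] P := by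
  refine ⟨_, ((hA.mul (by simpa only [zero_add] using hP.iterate_eps hk)).sub hB').smul _,
    Derivation.map_inv_smul_mul_sub _ ?_
      (delta_iterate_eps_succ hP (delta_eq_zero_of_bihom_zero hP) hk.le) hδB'⟩
  rw [Nat.cast_zero, sub_zero]
  exact mul_ne_zero (by norm_cast) (sub_ne_zero.mpr (by exact_mod_cast hk.ne'))

theorem exists_bihom_delta_eq_mul_iterate_eps (hP : Bihom N 0 d P) (hmk : m + k < d)
    (hA : Bihom N m p A) :
    ∃ B, Bihom N (m + (k + 1)) (p + (d - (k + 1))) B ∧ delta N B = A * (eps N)^[k] P := by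
  induction m generalizing k p A with
  | zero =>
    refine exists_bihom_delta_eq_of_delta_eq hP (by omega) hA bihom_zero ?_
    rw [map_zero, delta_eq_zero_of_bihom_zero hA, zero_mul]
  | succ m ih =>
    obtain ⟨B', hB', hδB'⟩ := ih (k := k + 1) (p := p + 1) (by omega) hA.map_delta
    refine exists_bihom_delta_eq_of_delta_eq hP (by omega) hA ?_ hδB'
    rwa [show m + 1 + (k + 1) = m + (k + 1 + 1) by omega,
      show p + (d - (k + 1)) = p + 1 + (d - (k + 1 + 1)) by omega]

theorem statement11_general (N : ℕ) (d : ℕ) (hd : 3 ≤ d)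
    (P : S N)
    (hPsupp : P ∈ MvPolynomial.supported ℂ
      (Set.range (Sum.inr : Fin (N + 1) → Fin (N + 1) ⊕ Fin (N + 1))))
    (hPhom : P.IsWeightedHomogeneous (wX N) d)
    (A : S N)
    (hAsupp : A ∈ MvPolynomial.supported ℂ
      (Set.range (Sum.inl : Fin (N + 1) → Fin (N + 1) ⊕ Fin (N + 1))))
    (hAhom : A.IsWeightedHomogeneous (wY N) (d - 3)) :
    ∃ B : S N, Bihom N (d - 1) (d - 2) B ∧
      deltaOp N B = A * ∑ i : Fin (N + 1), X (Sum.inl i) * pderiv (Sum.inr i) P := by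
  have hP : Bihom N 0 d P :=
    ⟨isWeightedHomogeneous_zero_of_mem_supported (by rintro _ ⟨i, rfl⟩; rfl) hPsupp, hPhom⟩
  have hA : Bihom N (d - 3) 0 A :=
    ⟨hAhom, isWeightedHomogeneous_zero_of_mem_supported (by rintro _ ⟨i, rfl⟩; rfl) hAsupp⟩
  obtain ⟨B, hB, hδB⟩ := exists_bihom_delta_eq_mul_iterate_eps (k := 1) hP (by omega) hA
  refine ⟨B, ?_, ?_⟩
  · rwa [show d - 1 = d - 3 + (1 + 1) by omega, show d - 2 = 0 + (d - (1 + 1)) by omega]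
  · rw [← delta_apply, hδB, Function.iterate_one, eps_apply]

/-- For `P` homogeneous of degree `d ≥ 3` in the `X`-variables only and
`A` homogeneous of degree `d − 3` in the `Y`-variables only, there is a bihomogeneous `B` of
bidegree `(d−1, d−2)` with `δ(B) = A · (∑ᵢ Yᵢ·∂P/∂Xᵢ)`. -/
theorem statement11 (N : ℕ) (hN : 2 ≤ N) (d : ℕ) (hd : 3 ≤ d)
    (P : S N)
    (hPsupp : P ∈ MvPolynomial.supported ℂ
      (Set.range (Sum.inr : Fin (N + 1) → Fin (N + 1) ⊕ Fin (N + 1))))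
    (hPhom : P.IsWeightedHomogeneous (wX N) d)
    (A : S N)
    (hAsupp : A ∈ MvPolynomial.supported ℂ
      (Set.range (Sum.inl : Fin (N + 1) → Fin (N + 1) ⊕ Fin (N + 1))))
    (hAhom : A.IsWeightedHomogeneous (wY N) (d - 3)) :
    ∃ B : S N, Bihom N (d - 1) (d - 2) B ∧
      deltaOp N B = A * ∑ i : Fin (N + 1), X (Sum.inl i) * pderiv (Sum.inr i) P :=
  statement11_general N d hd P hPsupp hPhom A hAsupp hAhom
end
end
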